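/- arXiv:math/0311319 — 2 statements merged into one kernel-verified Lean document; each statement's English description precedes it below -/
import Mathlib

section
/- There exists s ∈ ℤ_2 with s² = −n. For any such s, the numbers α = (n+1)/(2n), β = (1+s)/(2n), γ = (1−s)/(2n) and α' = (n−1)/(2n), β' = (−1+s)/(2n), γ' = (−1−s)/(2n) are well-defined elements of ℤ_2 (the numerators are divisible by 2 and n is a unit), and both elements e = α + β·f_Q(X) + γ·f_N(X) and e' = α' + β'·f_Q(X) + γ'·f_N(X) of R are idempotent: e² = e and e'² = e'. -/
/-!
A square root `s` of `-n` plays the role of the quadratic Gauss sum of `ZMod n`, whose square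
is `χ(-1) n = -n` since `n ≡ 3 mod 4`. In `ℤ_[2][X]/(X^n - 1)`, the group ring of `ZMod n`,
the element `e` has coefficient function `W / 2n` with `W = 1 + s χ + n δ₀`, and the Jacobi sum
`J(χ, χ) = -χ(-1)` yields the convolution identity `W * W = 2n W`, i.e. `e² = e`. The element
`e'` is `1 - e` built from the other root `-s`. Finally `-n ≡ 1 mod 8` is a square in `ℤ_[2]`
by Hensel's lemma, and `s² = -n` forces `s` odd, so all coefficients are `2`-adic integers.
-/

open Polynomial
open scoped Classical

/-- `f_Q(X) = ∑_{k ∈ Q} X^k`, where `Q` is the set of `k` with `1 ≤ k ≤ n-1` that are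
quadratic residues modulo `n`, as a polynomial over the 2-adic integers. -/
noncomputable def fQpoly (n : ℕ) : Polynomial ℤ_[2] :=
  ∑ k ∈ (Finset.Ico 1 n).filter (fun k : ℕ => IsSquare ((k : ZMod n))), X ^ k

/-- `f_N(X) = ∑_{k ∈ N} X^k`, where `N` is the set of `k` with `1 ≤ k ≤ n-1` that are
quadratic nonresidues modulo `n`, as a polynomial over the 2-adic integers. -/
noncomputable def fNpoly (n : ℕ) : Polynomial ℤ_[2] :=
  ∑ k ∈ (Finset.Ico 1 n).filter (fun k : ℕ => ¬ IsSquare ((k : ZMod n))), X ^ k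

open Finset

namespace PadicInt

theorem exists_sq_eq_of_emod_eight_eq_one {m : ℤ} (hm : m % 8 = 1) :
    ∃ s : ℤ_[2], s ^ 2 = m := by
  set F : ℤ[X] := X ^ 2 - C m
  have hF : F.aeval (1 : ℤ_[2]) = ((1 - m : ℤ) : ℤ_[2]) := by simp [F]
  have hF' : (derivative F).aeval (1 : ℤ_[2]) = 2 := by simp [F, map_ofNat]
  have hnorm : ‖F.aeval (1 : ℤ_[2])‖ < ‖(derivative F).aeval (1 : ℤ_[2])‖ ^ 2 := by
    have h8 : ((2 : ℕ) : ℤ) ^ 3 ∣ 1 - m := by omega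
    have h2 : ‖(2 : ℤ_[2])‖ = 2⁻¹ := by exact_mod_cast norm_p (p := 2)
    rw [hF, hF', h2]
    calc ‖((1 - m : ℤ) : ℤ_[2])‖ ≤ (2 : ℝ) ^ (-3 : ℤ) :=
          norm_int_le_pow_iff_dvd.mpr h8
      _ < 2⁻¹ ^ 2 := by norm_num
  obtain ⟨s, hs, -⟩ := hensels_lemma hnorm
  exact ⟨s, by simpa [F, sub_eq_zero] using hs⟩

theorem isUnit_natCast_of_odd {n : ℕ} (hn : Odd n) : IsUnit (n : ℤ_[2]) :=
  isUnit_iff.mpr (norm_natCast_eq_one_iff.mpr (Nat.coprime_two_left.mpr hn))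

theorem two_dvd_one_add_of_sq_eq_neg {n : ℕ} (hn : Odd n) {s : ℤ_[2]} (hs : s ^ 2 = -n) :
    2 ∣ 1 + s := by
  obtain ⟨k, rfl⟩ := hn
  have hprod : (2 : ℤ_[2]) ∣ (s - 1) * (s + 1) :=
    ⟨-(k + 1), by push_cast at hs; linear_combination hs⟩
  rcases (prime_p (p := 2)).dvd_or_dvd (by exact_mod_cast hprod) with ⟨t, ht⟩ | h
  · exact ⟨t + 1, by push_cast at ht; linear_combination ht⟩
  · simpa [add_comm] using h

theorem exists_two_mul_natCast_mul_eq {n : ℕ} (hn : Odd n) {x : ℤ_[2]} (hx : 2 ∣ x) :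
    ∃ y, 2 * (n : ℤ_[2]) * y = x := by
  obtain ⟨y, hy⟩ := (isUnit_natCast_of_odd hn).mul_right_dvd.mpr hx
  exact ⟨y, hy.symm⟩

end PadicInt

namespace MulChar

variable {F R : Type*} [Field F] [CommRing R] {χ : MulChar F R}

theorem IsQuadratic.apply_sq_of_ne_zero (hχ : χ.IsQuadratic) {a : F} (ha : a ≠ 0) :
    χ a ^ 2 = 1 := by
  rw [← pow_apply' χ two_ne_zero, hχ.sq_eq_one, one_apply (Ne.isUnit ha)]

variable [Fintype F] [DecidableEq F] [IsDomain R]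

theorem sum_mul_apply_sub_of_isQuadratic (hχ : χ.IsQuadratic) (hχ1 : χ ≠ 1) (c : F) :
    ∑ a, χ a * χ (c - a) = χ (-1) * if c = 0 then (Fintype.card F - 1 : R) else -1 := by
  by_cases hc : c = 0
  · have hterm (a : F) : χ a * χ (c - a) = χ (-1) * (1 - if a = 0 then 1 else 0) := by
      rcases eq_or_ne a 0 with rfl | ha
      · simp
      · rw [hc, zero_sub, neg_eq_neg_one_mul, map_mul, if_neg ha, sub_zero, mul_one,
          mul_left_comm, ← pow_two, hχ.apply_sq_of_ne_zero ha, mul_one]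
    rw [sum_congr rfl fun a _ => hterm a, ← mul_sum, sum_sub_distrib, if_pos hc]
    simp
  · calc ∑ a, χ a * χ (c - a) = ∑ x, χ (c * x) * χ (c * (1 - x)) :=
          (Fintype.sum_equiv (Equiv.mulLeft₀ c hc) _ _ fun x => by simp [mul_sub]).symm
      _ = jacobiSum χ χ⁻¹ := by
          rw [jacobiSum, hχ.inv]
          refine sum_congr rfl fun x _ => ?_
          rw [map_mul, map_mul, mul_mul_mul_comm, ← pow_two, hχ.apply_sq_of_ne_zero hc, one_mul]
      _ = _ := by rw [jacobiSum_nontrivial_inv hχ1, if_neg hc]; ring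

/-- `2q` times the coefficient function of the idempotent (`q = |F|`), where `s` stands for a
square root of `χ(-1) q`, the square of the quadratic Gauss sum. -/
def idempotentWeight (χ : MulChar F R) (s : R) (c : F) : R :=
  1 + s * χ c + if c = 0 then (Fintype.card F : R) else 0

theorem sum_idempotentWeight_mul_sub (hχ : χ.IsQuadratic) (hχ1 : χ ≠ 1) {s : R}
    (hs : s ^ 2 = χ (-1) * Fintype.card F) (c : F) :
    ∑ a, idempotentWeight χ s a * idempotentWeight χ s (c - a) =
      2 * Fintype.card F * idempotentWeight χ s c := by
  have hsum : ∑ a, χ a = 0 := sum_eq_zero_of_ne_one hχ1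
  have hsum' : ∑ a, χ (c - a) = 0 := by
    rw [← hsum]; exact Fintype.sum_equiv (Equiv.subLeft c) _ _ fun _ => rfl
  have hχχ := sum_mul_apply_sub_of_isQuadratic hχ hχ1 c
  have hχ2 : χ (-1) ^ 2 = 1 := hχ.apply_sq_of_ne_zero (neg_ne_zero.mpr one_ne_zero)
  simp only [idempotentWeight, add_mul, mul_add, sum_add_distrib, ← mul_sum, ← sum_mul,
    mul_assoc, mul_left_comm _ s, hsum, hsum', hχχ, mul_ite, ite_mul, mul_zero, zero_mul,
    sum_ite_eq, sum_ite_eq', sub_eq_zero, mem_univ, if_true, sub_zero, sum_const, card_univ,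
    nsmul_eq_mul]
  have hs' : s * (s * χ (-1)) = Fintype.card F := by
    rw [← mul_assoc, ← pow_two, hs, mul_right_comm, ← pow_two, hχ2, one_mul]
  split_ifs
  · linear_combination (Fintype.card F - 1 : R) * hs'
  · linear_combination -hs'

end MulChar

namespace AddChar

variable {G R A : Type*} [AddCommGroup G] [Fintype G] [CommSemiring R] [CommSemiring A]
  [Algebra R A]

theorem sq_sum_smul (ψ : AddChar G A) (w : G → R) :
    (∑ g, w g • ψ g) ^ 2 = ∑ c, (∑ a, w a * w (c - a)) • ψ c := by
  calc (∑ g, w g • ψ g) ^ 2 = ∑ a, ∑ b, (w a * w b) • ψ (a + b) := by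
        simp only [sq, sum_mul_sum, smul_mul_smul_comm, map_add_eq_mul]
    _ = ∑ a, ∑ c, (w a * w (c - a)) • ψ c := by
        refine sum_congr rfl fun a _ => ?_
        exact Fintype.sum_equiv (Equiv.addLeft a) _ _ fun b => by simp
    _ = ∑ c, (∑ a, w a * w (c - a)) • ψ c := by
        rw [sum_comm]; simp only [sum_smul]

theorem isIdempotentElem_sum_smul (ψ : AddChar G A) {w : G → R}
    (hw : ∀ c, ∑ a, w a * w (c - a) = w c) : IsIdempotentElem (∑ g, w g • ψ g) := by
  rw [IsIdempotentElem, ← sq, sq_sum_smul]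
  simp only [hw]

end AddChar

theorem sum_mul_sub_eq_self_of_mul_eq {G R : Type*} [AddCommGroup G] [Fintype G] [CommRing R]
    [IsDomain R] {d : R} (hd : d ≠ 0) {w W : G → R} (hwW : ∀ g, d * w g = W g)
    (hW : ∀ c, ∑ a, W a * W (c - a) = d * W c) (c : G) : ∑ a, w a * w (c - a) = w c := by
  refine mul_left_cancel₀ (mul_ne_zero hd hd) ?_
  calc d * d * ∑ a, w a * w (c - a) = ∑ a, W a * W (c - a) := by
        rw [mul_sum]; simp only [← hwW]; exact sum_congr rfl fun a _ => by ring
    _ = d * d * w c := by rw [hW, ← hwW, mul_assoc]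

section CyclicQuotient

variable (R : Type*) [CommRing R] (n : ℕ)

theorem mk_X_pow_eq_one :
    (Ideal.Quotient.mk (Ideal.span {(X : R[X]) ^ n - 1}) X) ^ n = 1 := by
  rw [← map_pow, ← map_one (Ideal.Quotient.mk _), Ideal.Quotient.eq]
  exact Ideal.subset_span rfl

variable [NeZero n]

noncomputable def cyclicChar : AddChar (ZMod n) (R[X] ⧸ Ideal.span {(X : R[X]) ^ n - 1}) :=
  AddChar.zmodChar n (mk_X_pow_eq_one R n)

theorem mk_X_pow (k : ℕ) :
    Ideal.Quotient.mk (Ideal.span {(X : R[X]) ^ n - 1}) (X ^ k) = cyclicChar R n k := by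
  rw [cyclicChar, AddChar.zmodChar_apply', map_pow]

end CyclicQuotient

theorem ZMod.sum_filter_Ico_natCast {M : Type*} [AddCommMonoid M] {n : ℕ} [NeZero n]
    (P : ZMod n → Prop) [DecidablePred P] (f : ZMod n → M) :
    ∑ k ∈ (Ico 1 n).filter (fun k : ℕ => P k), f k =
      ∑ a ∈ univ.filter (fun a : ZMod n => a ≠ 0 ∧ P a), f a := by
  refine sum_nbij' (fun k => (k : ZMod n)) ZMod.val (fun k hk => ?_) (fun a ha => ?_)
    (fun k hk => ?_) (fun a _ => ZMod.natCast_zmod_val a) (fun _ _ => rfl)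
  · simp only [mem_filter, mem_Ico, mem_univ, true_and] at hk ⊢
    refine ⟨?_, hk.2⟩
    rw [Ne, ZMod.natCast_eq_zero_iff]
    exact Nat.not_dvd_of_pos_of_lt hk.1.1 hk.1.2
  · simp only [mem_filter, mem_Ico, mem_univ, true_and] at ha ⊢
    refine ⟨⟨Nat.pos_of_ne_zero ((ZMod.val_ne_zero a).mpr ha.1), ZMod.val_lt a⟩, ?_⟩
    rw [ZMod.natCast_zmod_val]
    exact ha.2
  · simp only [mem_filter, mem_Ico] at hk
    exact ZMod.val_cast_of_lt hk.1.2

theorem mk_fQpoly_eq_sum (n : ℕ) [NeZero n] :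
    Ideal.Quotient.mk (Ideal.span {(X : ℤ_[2][X]) ^ n - 1}) (fQpoly n) =
      ∑ a ∈ univ.filter (fun a : ZMod n => a ≠ 0 ∧ IsSquare a), cyclicChar ℤ_[2] n a := by
  simp only [fQpoly, map_sum, mk_X_pow]
  convert ZMod.sum_filter_Ico_natCast (fun a : ZMod n => IsSquare a) (cyclicChar ℤ_[2] n)

theorem mk_fNpoly_eq_sum (n : ℕ) [NeZero n] :
    Ideal.Quotient.mk (Ideal.span {(X : ℤ_[2][X]) ^ n - 1}) (fNpoly n) =
      ∑ a ∈ univ.filter (fun a : ZMod n => a ≠ 0 ∧ ¬ IsSquare a),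
        cyclicChar ℤ_[2] n a := by
  simp only [fNpoly, map_sum, mk_X_pow]
  convert ZMod.sum_filter_Ico_natCast (fun a : ZMod n => ¬ IsSquare a) (cyclicChar ℤ_[2] n)

noncomputable def residueCombination (n : ℕ) (α β γ : ℤ_[2]) :
    ℤ_[2][X] ⧸ Ideal.span {(X : ℤ_[2][X]) ^ n - 1} :=
  Ideal.Quotient.mk _ (C α + C β * fQpoly n + C γ * fNpoly n)

theorem residueCombination_eq_sum (n : ℕ) [NeZero n] (α β γ : ℤ_[2]) :
    residueCombination n α β γ =
      ∑ c : ZMod n,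
        (if c = 0 then α else if IsSquare c then β else γ) • cyclicChar ℤ_[2] n c := by
  have hsplit (c : ZMod n) :
      (if c = 0 then α else if IsSquare c then β else γ) • cyclicChar ℤ_[2] n c =
        α • (if c = 0 then cyclicChar ℤ_[2] n c else 0)
        + β • (if c ≠ 0 ∧ IsSquare c then cyclicChar ℤ_[2] n c else 0)
        + γ • (if c ≠ 0 ∧ ¬ IsSquare c then cyclicChar ℤ_[2] n c else 0) := by
    by_cases hc : c = 0 <;> by_cases hsq : IsSquare c <;> simp [hc, hsq]
  rw [sum_congr rfl fun c _ => hsplit c, sum_add_distrib, sum_add_distrib, ← smul_sum,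
    ← smul_sum, ← smul_sum, Fintype.sum_ite_eq', ← sum_filter, ← sum_filter,
    ← mk_fQpoly_eq_sum, ← mk_fNpoly_eq_sum, AddChar.map_zero_eq_one]
  have hC (a : ℤ_[2]) (p : ℤ_[2][X]) : Ideal.Quotient.mk (Ideal.span {(X : ℤ_[2][X]) ^ n - 1})
      (C a * p) = a • Ideal.Quotient.mk (Ideal.span {(X : ℤ_[2][X]) ^ n - 1}) p := by
    rw [← smul_eq_C_mul, ← Ideal.Quotient.mkₐ_eq_mk ℤ_[2], map_smul]
  rw [residueCombination, ← mul_one (C α), map_add, map_add, hC, hC, hC, map_one]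

theorem residueCombination_one_sub_neg_neg (n : ℕ) (α β γ : ℤ_[2]) :
    residueCombination n (1 - α) (-γ) (-β) = 1 - residueCombination n α γ β := by
  rw [residueCombination, residueCombination, ← map_one (Ideal.Quotient.mk _), ← map_sub]
  congr 1
  simp only [map_sub, map_neg, map_one]
  ring

theorem isIdempotentElem_residueCombination {n : ℕ} (hn : n.Prime) (hn4 : n % 4 = 3)
    {s α β γ : ℤ_[2]} (hs : s ^ 2 = -n) (hα : 2 * (n : ℤ_[2]) * α = n + 1)
    (hβ : 2 * (n : ℤ_[2]) * β = 1 + s) (hγ : 2 * (n : ℤ_[2]) * γ = 1 - s) :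
    IsIdempotentElem (residueCombination n α β γ) := by
  have := Fact.mk hn
  set χ := (quadraticChar (ZMod n)).ringHomComp (Int.castRingHom ℤ_[2])
  have hχ : χ.IsQuadratic := (quadraticChar_isQuadratic _).comp _
  have hχ1 : χ ≠ 1 := (MulChar.ringHomComp_ne_one_iff Int.cast_injective).mpr
    (quadraticChar_ne_one (by rw [ZMod.ringChar_zmod_n]; omega))
  have hχneg : χ (-1) = -1 := by
    have : quadraticChar (ZMod n) (-1) = -1 := by
      rw [quadraticChar_neg_one_iff_not_isSquare, ZMod.exists_sq_eq_neg_one_iff]; simp [hn4]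
    simp [χ, this]
  have hs' : s ^ 2 = χ (-1) * Fintype.card (ZMod n) := by rw [hχneg, ZMod.card, hs]; ring
  have hw (c : ZMod n) : 2 * (n : ℤ_[2]) * (if c = 0 then α else if IsSquare c then β else γ) =
      MulChar.idempotentWeight χ s c := by
    rw [MulChar.idempotentWeight, ZMod.card]
    by_cases hc : c = 0
    · rw [if_pos hc, if_pos hc, hc, MulChar.map_zero, hα]; ring
    by_cases hsq : IsSquare c
    · simp [χ, hc, hsq, hβ, (quadraticChar_one_iff_isSquare hc).mpr hsq]
    · simp [χ, hc, hsq, hγ, quadraticChar_neg_one_iff_not_isSquare.mpr hsq, sub_eq_add_neg]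
  rw [residueCombination_eq_sum]
  exact AddChar.isIdempotentElem_sum_smul _ <| sum_mul_sub_eq_self_of_mul_eq
    (mul_ne_zero two_ne_zero (by exact_mod_cast hn.ne_zero)) hw
    (by simpa only [ZMod.card] using MulChar.sum_idempotentWeight_mul_sub hχ hχ1 hs')

theorem stmt16 (n : ℕ) (hn : n.Prime) (hn8 : n % 8 = 7) :
    (∃ s : ℤ_[2], s ^ 2 = -(n : ℤ_[2])) ∧
    ∀ s : ℤ_[2], s ^ 2 = -(n : ℤ_[2]) →
      ∃ α β γ α' β' γ' : ℤ_[2],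
        2 * (n : ℤ_[2]) * α = n + 1 ∧
        2 * (n : ℤ_[2]) * β = 1 + s ∧
        2 * (n : ℤ_[2]) * γ = 1 - s ∧
        2 * (n : ℤ_[2]) * α' = n - 1 ∧
        2 * (n : ℤ_[2]) * β' = -1 + s ∧
        2 * (n : ℤ_[2]) * γ' = -1 - s ∧
        (Ideal.Quotient.mk (Ideal.span {(X : Polynomial ℤ_[2]) ^ n - 1})
            (C α + C β * fQpoly n + C γ * fNpoly n)) ^ 2 =
          Ideal.Quotient.mk (Ideal.span {(X : Polynomial ℤ_[2]) ^ n - 1})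
            (C α + C β * fQpoly n + C γ * fNpoly n) ∧
        (Ideal.Quotient.mk (Ideal.span {(X : Polynomial ℤ_[2]) ^ n - 1})
            (C α' + C β' * fQpoly n + C γ' * fNpoly n)) ^ 2 =
          Ideal.Quotient.mk (Ideal.span {(X : Polynomial ℤ_[2]) ^ n - 1})
            (C α' + C β' * fQpoly n + C γ' * fNpoly n) := by
  have hodd : Odd n := Nat.odd_iff.mpr (by omega)
  refine ⟨?_, fun s hs => ?_⟩
  · obtain ⟨s, hs⟩ := PadicInt.exists_sq_eq_of_emod_eight_eq_one (m := -n) (by omega)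
    exact ⟨s, by exact_mod_cast hs⟩
  obtain ⟨α, hα⟩ := PadicInt.exists_two_mul_natCast_mul_eq hodd (x := n + 1) <| by
    obtain ⟨k, rfl⟩ := hodd
    exact ⟨k + 1, by push_cast; ring⟩
  have h2 := PadicInt.two_dvd_one_add_of_sq_eq_neg hodd hs
  obtain ⟨β, hβ⟩ := PadicInt.exists_two_mul_natCast_mul_eq hodd h2
  obtain ⟨γ, hγ⟩ := PadicInt.exists_two_mul_natCast_mul_eq hodd (x := 1 - s) <| by
    convert h2.sub (dvd_mul_right 2 s) using 1; ring
  have hn4 : n % 4 = 3 := by omega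
  have he := isIdempotentElem_residueCombination hn hn4 hs hα hβ hγ
  have he' := isIdempotentElem_residueCombination hn hn4 (s := -s) (by rw [neg_sq, hs]) hα
    (by rw [hγ]; ring) (by rw [hβ]; ring)
  refine ⟨α, β, γ, 1 - α, -γ, -β, hα, hβ, hγ, by linear_combination -hα,
    by linear_combination -hγ, by linear_combination -hβ, (sq _).trans he.eq, ?_⟩
  exact (sq _).trans ((residueCombination_one_sub_neg_neg n α β γ).symm ▸ he'.one_sub).eq
end

section
/- There exists λ ∈ ℤ_2 with λ² − λ + 2 = 0, and for any such λ one has the factorization X^7 − 1 = (X − 1)·(X³ + λX² + (λ−1)X − 1)·(X³ − (λ−1)X² − λX − 1) in ℤ_2[X]; moreover both cubic factors X³ + λX² + (λ−1)X − 1 and X³ − (λ−1)X² − λX − 1 are irreducible in ℤ_2[X]. -/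
/-!
A root `λ` of `X² - X + 2` exists in `ℤ₂` by Hensel's lemma at `0`, where the value `2` is small
and the derivative `-1` is a unit. The second cubic is the first one taken at the other root
`1 - λ`, and the factorization of `X⁷ - 1` holds modulo `λ² - λ + 2`. Modulo 2 each cubic becomes
`X³ + X² + 1` or `X³ + X + 1`, which has no root in `𝔽₂`, and a monic polynomial whose
reduction is irreducible is itself irreducible.
-/

open Polynomial

namespace Polynomial

variable {R : Type*} [CommRing R]

noncomputable def cubicFactor (a : R) : R[X] :=
  X ^ 3 + C a * X ^ 2 + C (a - 1) * X - 1

theorem monic_cubicFactor [Nontrivial R] (a : R) : (cubicFactor a).Monic := by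
  unfold cubicFactor; monicity!

theorem natDegree_cubicFactor [Nontrivial R] (a : R) : (cubicFactor a).natDegree = 3 := by
  unfold cubicFactor; compute_degree!

theorem map_cubicFactor {S : Type*} [CommRing S] (φ : R →+* S) (a : R) :
    (cubicFactor a).map φ = cubicFactor (φ a) := by
  simp [cubicFactor]

theorem cubicFactor_one_sub (a : R) :
    cubicFactor (1 - a) = X ^ 3 - C (a - 1) * X ^ 2 - C a * X - 1 := by
  simp only [cubicFactor, sub_sub_cancel_left, C_neg, C_sub, C_1]
  ring

theorem X_pow_seven_sub_one_eq_mul_cubicFactor {a : R} (ha : a ^ 2 - a + 2 = 0) :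
    (X ^ 7 - 1 : R[X]) = (X - 1) * cubicFactor a * cubicFactor (1 - a) := by
  have hC : C a ^ 2 - C a + 2 = (0 : R[X]) := by
    simpa [map_ofNat C] using congrArg C ha
  simp only [cubicFactor, sub_sub_cancel_left, C_neg, C_sub, C_1]
  linear_combination ((X - 1) * (X ^ 4 + 2 * X ^ 3 + X ^ 2) : R[X]) * hC

theorem irreducible_cubicFactor_zmod_two (e : ZMod 2) : Irreducible (cubicFactor e) := by
  have hdeg := natDegree_cubicFactor e
  rw [irreducible_iff_roots_eq_zero_of_degree_le_three (by omega) (by omega)]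
  refine Multiset.eq_zero_of_forall_notMem fun x hx => ?_
  have hroot := (mem_roots'.1 hx).2
  clear hx hdeg
  simp only [cubicFactor, IsRoot, eval_sub, eval_add, eval_mul, eval_pow, eval_C, eval_X,
    eval_one] at hroot
  revert e x
  decide

theorem irreducible_cubicFactor_of_ringHom_zmod_two [IsDomain R] (φ : R →+* ZMod 2) (a : R) :
    Irreducible (cubicFactor a) :=
  (monic_cubicFactor a).irreducible_of_irreducible_map φ _
    (map_cubicFactor φ a ▸ irreducible_cubicFactor_zmod_two (φ a))

end Polynomial

theorem PadicInt.exists_sq_sub_self_add_two_eq_zero : ∃ a : ℤ_[2], a ^ 2 - a + 2 = 0 := by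
  have hnorm : ‖(X ^ 2 - X + 2 : ℤ_[2][X]).aeval (0 : ℤ_[2])‖ <
      ‖(derivative (X ^ 2 - X + 2 : ℤ_[2][X])).aeval (0 : ℤ_[2])‖ ^ 2 := by
    have h2 : ‖(2 : ℤ_[2])‖ < 1 := by
      rw [PadicInt.norm_lt_one_iff_dvd]; exact_mod_cast dvd_refl (2 : ℤ_[2])
    simpa using h2
  obtain ⟨a, ha, -⟩ := hensels_lemma hnorm
  exact ⟨a, by simpa using ha⟩

theorem stmt19 :
    (∃ lam : ℤ_[2], lam ^ 2 - lam + 2 = 0) ∧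
    ∀ lam : ℤ_[2], lam ^ 2 - lam + 2 = 0 →
      ((X ^ 7 - 1 : Polynomial ℤ_[2]) =
        (X - 1) * (X ^ 3 + C lam * X ^ 2 + C (lam - 1) * X - 1) *
          (X ^ 3 - C (lam - 1) * X ^ 2 - C lam * X - 1)) ∧
      Irreducible (X ^ 3 + C lam * X ^ 2 + C (lam - 1) * X - 1 : Polynomial ℤ_[2]) ∧
      Irreducible (X ^ 3 - C (lam - 1) * X ^ 2 - C lam * X - 1 : Polynomial ℤ_[2]) := by
  refine ⟨PadicInt.exists_sq_sub_self_add_two_eq_zero, fun lam h => ?_⟩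
  rw [← cubicFactor_one_sub]
  exact ⟨X_pow_seven_sub_one_eq_mul_cubicFactor h,
    irreducible_cubicFactor_of_ringHom_zmod_two PadicInt.toZMod lam,
    irreducible_cubicFactor_of_ringHom_zmod_two PadicInt.toZMod (1 - lam)⟩
end
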